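/- arXiv:2510.01436 — 4 statements merged into one kernel-verified Lean document; each statement's English description precedes it below -/
import Mathlib

section
/- Let r ≥ 1 and let fᵢ = ∑_{j≥i-1} aⱼ xʲ and gᵢ = ∑_{j≥i-1} bⱼ xʲ be formal power series with b_{i-1} ≠ 0, for some fixed 1 ≤ i ≤ r. Then for all k ≥ 0, the truncation at precision k of the quotient fᵢ/gᵢ (taken in the field of Laurent series) equals the truncation at precision k of T_{k+r-1}(fᵢ)/T_{k+r-1}(gᵢ): T_k(fᵢ/gᵢ) = T_k(T_{k+r-1}(fᵢ)/T_{k+r-1}(gᵢ)). -/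
/-- Truncation of a Laurent series at precision `k`: keep all terms of degree `≤ k`. -/
noncomputable def laurentTrunc {C : Type*} [Field C] (k : ℤ) (f : LaurentSeries C) :
    LaurentSeries C where
  coeff n := if n ≤ k then f.coeff n else 0
  isPWO_support' := f.isPWO_support'.mono (by
    intro n hn
    simp only [Function.mem_support] at hn ⊢
    intro h0
    exact hn (by simp [h0]))

lemma le_orderTop_of_forall {C : Type*} [Field C] {x : LaurentSeries C} {n : ℤ}
    (h : ∀ m < n, x.coeff m = 0) : (n : WithTop ℤ) ≤ x.orderTop := by
  rcases eq_or_ne x 0 with rfl | hx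
  · simp
  · obtain ⟨o, ho⟩ := WithTop.ne_top_iff_exists.mp (HahnSeries.orderTop_ne_top.mpr hx)
    rw [← ho, WithTop.coe_le_coe]
    by_contra hlt
    exact HahnSeries.coeff_orderTop_ne ho.symm (h o (lt_of_not_ge hlt))

/-- For `1 ≤ i ≤ r`, if `f = ∑_{j≥i-1} aⱼxʲ` and `g = ∑_{j≥i-1} bⱼxʲ` with
`b_{i-1} ≠ 0`, then for all `k ≥ 0`,
`T_k(f/g) = T_k( T_{k+r-1}(f) / T_{k+r-1}(g) )`. -/
theorem trunc_div_trunc (C : Type*) [Field C] [CharZero C]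
    (r i : ℕ) (hr : 1 ≤ r) (hi1 : 1 ≤ i) (hir : i ≤ r)
    (f g : LaurentSeries C)
    (hf : ∀ m : ℤ, m < (i : ℤ) - 1 → f.coeff m = 0)
    (hg : ∀ m : ℤ, m < (i : ℤ) - 1 → g.coeff m = 0)
    (hgne : g.coeff ((i : ℤ) - 1) ≠ 0)
    (k : ℤ) (hk : 0 ≤ k) :
    laurentTrunc k (f / g) =
      laurentTrunc k (laurentTrunc (k + r - 1) f / laurentTrunc (k + r - 1) g) := by
  have hirZ : (i : ℤ) ≤ r := by exact_mod_cast hir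
  have hrZ : (1 : ℤ) ≤ r := by exact_mod_cast hr
  have hik : (i : ℤ) - 1 ≤ k + r - 1 := by linarith
  set f' := laurentTrunc (k + r - 1) f with hf'def
  set g' := laurentTrunc (k + r - 1) g with hg'def
  have hcf' : ∀ n, f'.coeff n = if n ≤ k + r - 1 then f.coeff n else 0 := fun n => rfl
  have hcg' : ∀ n, g'.coeff n = if n ≤ k + r - 1 then g.coeff n else 0 := fun n => rfl
  have hg'ne : g'.coeff ((i : ℤ) - 1) ≠ 0 := by rw [hcg', if_pos hik]; exact hgne
  have hgz : g ≠ 0 := HahnSeries.ne_zero_of_coeff_ne_zero hgne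
  have hg'z : g' ≠ 0 := HahnSeries.ne_zero_of_coeff_ne_zero hg'ne
  set v := HahnSeries.addVal ℤ C with hv
  have hvo : ∀ x : LaurentSeries C, v x = x.orderTop := fun x => HahnSeries.addVal_apply
  have hvg : v g = (((i : ℤ) - 1 : ℤ) : WithTop ℤ) :=
    le_antisymm (HahnSeries.addVal_le_of_coeff_ne_zero hgne)
      (by rw [hvo]; exact le_orderTop_of_forall hg)
  have hg'lo : ∀ m : ℤ, m < (i : ℤ) - 1 → g'.coeff m = 0 := by
    intro m hm; rw [hcg']; split
    · exact hg m hm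
    · rfl
  have hvg' : v g' = (((i : ℤ) - 1 : ℤ) : WithTop ℤ) :=
    le_antisymm (HahnSeries.addVal_le_of_coeff_ne_zero hg'ne)
      (by rw [hvo]; exact le_orderTop_of_forall hg'lo)
  have hvf : (((i : ℤ) - 1 : ℤ) : WithTop ℤ) ≤ v f := by
    rw [hvo]; exact le_orderTop_of_forall hf
  have hvsubg : (((k + r : ℤ)) : WithTop ℤ) ≤ v (g' - g) := by
    rw [hvo]
    apply le_orderTop_of_forall
    intro m hm
    rw [HahnSeries.coeff_sub, hcg', if_pos (by linarith : m ≤ k + r - 1), sub_self]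
  have hvsubf : (((k + r : ℤ)) : WithTop ℤ) ≤ v (f - f') := by
    rw [hvo]
    apply le_orderTop_of_forall
    intro m hm
    rw [HahnSeries.coeff_sub, hcf', if_pos (by linarith : m ≤ k + r - 1), sub_self]
  have hnum : (((k + r + i - 1 : ℤ)) : WithTop ℤ) ≤ v (f * g' - g * f') := by
    have h1 : f * g' - g * f' = f * (g' - g) + g * (f - f') := by ring
    rw [h1]
    apply AddValuation.map_le_add
    · rw [v.map_mul]
      calc ((k + r + i - 1 : ℤ) : WithTop ℤ)
          = (((i : ℤ) - 1 : ℤ) : WithTop ℤ) + ((k + r : ℤ) : WithTop ℤ) := by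
            rw [← WithTop.coe_add]; congr 1; ring
        _ ≤ v f + v (g' - g) := add_le_add hvf hvsubg
    · rw [v.map_mul]
      calc ((k + r + i - 1 : ℤ) : WithTop ℤ)
          = (((i : ℤ) - 1 : ℤ) : WithTop ℤ) + ((k + r : ℤ) : WithTop ℤ) := by
            rw [← WithTop.coe_add]; congr 1; ring
        _ ≤ v g + v (f - f') := add_le_add hvg.ge hvsubf
  have hD : f / g - f' / g' = (f * g' - g * f') / (g * g') := div_sub_div f f' hgz hg'z
  have hggz : g * g' ≠ 0 := mul_ne_zero hgz hg'z
  have hDv : ((k + 1 : ℤ) : WithTop ℤ) ≤ v (f / g - f' / g') := by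
    have hmul : (f / g - f' / g') * (g * g') = f * g' - g * f' := by
      rw [hD, div_mul_cancel₀ _ hggz]
    have h2 : ((k + r + i - 1 : ℤ) : WithTop ℤ) ≤
        v (f / g - f' / g') + ((2 * i - 2 : ℤ) : WithTop ℤ) := by
      have : v ((f / g - f' / g') * (g * g')) = v (f / g - f' / g') + ((2 * i - 2 : ℤ) : WithTop ℤ) := by
        rw [v.map_mul, v.map_mul, hvg, hvg', ← WithTop.coe_add]
        congr 1
        exact WithTop.coe_inj.mpr (by ring)
      rw [← this, hmul]; exact hnum
    have h3 : ((k + r - i + 1 : ℤ) : WithTop ℤ) ≤ v (f / g - f' / g') := by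
      have hcoe : ((k + r + i - 1 : ℤ) : WithTop ℤ) =
          ((k + r - i + 1 : ℤ) : WithTop ℤ) + ((2 * i - 2 : ℤ) : WithTop ℤ) := by
        rw [← WithTop.coe_add]; congr 1; ring
      rw [hcoe] at h2
      exact (WithTop.add_le_add_iff_right (WithTop.coe_ne_top)).mp h2
    refine le_trans ?_ h3
    exact_mod_cast (by linarith : (k + 1 : ℤ) ≤ k + r - i + 1)
  have hcoeff : ∀ n : ℤ, n ≤ k → (f / g).coeff n = (f' / g').coeff n := by
    intro n hn
    have : (f / g - f' / g').coeff n = 0 := by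
      apply HahnSeries.coeff_eq_zero_of_lt_orderTop
      rw [← hvo]
      exact lt_of_lt_of_le (by exact_mod_cast (by linarith : n < k + 1)) hDv
    rw [HahnSeries.coeff_sub] at this
    exact sub_eq_zero.mp this
  ext n
  show (if n ≤ k then (f / g).coeff n else 0) = (if n ≤ k then (f' / g').coeff n else 0)
  split
  · exact hcoeff n ‹_›
  · rfl
end

section
/- Let φ₁,…,φ_ρ ∈ C[[x]] and let g = ∑_{i≥μ} bᵢxⁱ ∈ C[[x]] with b_μ ≠ 0. Write φⱼ = ∑ a_{i,j}xⁱ and g·φⱼ = ∑ c_{i,j}xⁱ, with row vectors a_i = (a_{i,1},…,a_{i,ρ}) and c_i = (c_{i,1},…,c_{i,ρ}) in C^ρ. Then for every k ≥ 0, Span_C{a₀,…,a_k} = Span_C{c₀,…,c_{k+μ}}. Consequently the row spaces of the coefficient matrices of (φ₁,…,φ_ρ) and (gφ₁,…,gφ_ρ) coincide. -/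
/-- Let `φ₁,…,φ_ρ ∈ C[[x]]` and `g = ∑_{i≥μ} bᵢxⁱ` with `b_μ ≠ 0`.  With
`a_i` (resp. `c_i`) the `i`-th coefficient row vector of `(φ₁,…,φ_ρ)` (resp. of
`(gφ₁,…,gφ_ρ)`), for every `k ≥ 0` we have `Span_C{a₀,…,a_k} = Span_C{c₀,…,c_{k+μ}}`;
consequently the row spaces of the two coefficient matrices coincide. -/
theorem row_space_mul_invariant (C : Type*) [Field C]
    (ρ μ : ℕ) (φ : Fin ρ → PowerSeries C) (g : PowerSeries C)
    (hglow : ∀ i : ℕ, i < μ → PowerSeries.coeff i g = 0)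
    (hgμ : PowerSeries.coeff μ g ≠ 0)
    (a c : ℕ → Fin ρ → C)
    (ha : ∀ (i : ℕ) (j : Fin ρ), a i j = PowerSeries.coeff i (φ j))
    (hc : ∀ (i : ℕ) (j : Fin ρ), c i j = PowerSeries.coeff i (g * φ j)) :
    (∀ k : ℕ, Submodule.span C (a '' Set.Iic k) = Submodule.span C (c '' Set.Iic (k + μ))) ∧
      Submodule.span C (Set.range a) = Submodule.span C (Set.range c) := by
  classical
  have key : ∀ n : ℕ,
      c n = ∑ q ∈ Finset.range (n + 1), (PowerSeries.coeff (n - q) g) • a q := by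
    intro n
    funext j
    have h1 : c n j = ∑ q ∈ Finset.range (n + 1),
        PowerSeries.coeff q (φ j) * PowerSeries.coeff (n - q) g := by
      rw [hc, mul_comm g, PowerSeries.coeff_mul,
        Finset.Nat.sum_antidiagonal_eq_sum_range_succ_mk]
    rw [h1, Finset.sum_apply]
    exact Finset.sum_congr rfl fun q _ => by
      simp [ha, mul_comm, Pi.smul_apply, smul_eq_mul]
  have mem_c : ∀ k n : ℕ, n ≤ k + μ → c n ∈ Submodule.span C (a '' Set.Iic k) := by
    intro k n hn
    rw [key]
    refine Submodule.sum_mem _ fun q hq => ?_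
    have hq' := Finset.mem_range.mp hq
    by_cases h : n - q < μ
    · rw [hglow _ h, zero_smul]; exact Submodule.zero_mem _
    · refine Submodule.smul_mem _ _ (Submodule.subset_span ⟨q, ?_, rfl⟩)
      simp only [Set.mem_Iic]
      omega
  have mem_a : ∀ k : ℕ, a k ∈ Submodule.span C (c '' Set.Iic (k + μ)) := by
    intro k
    induction k using Nat.strong_induction_on with
    | _ k ih =>
      have h1 : ∑ q ∈ Finset.range (k + μ + 1), (PowerSeries.coeff (k + μ - q) g) • a q
          = ∑ q ∈ Finset.range (k + 1), (PowerSeries.coeff (k + μ - q) g) • a q := by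
        refine (Finset.sum_subset (Finset.range_subset_range.mpr (by omega)) ?_).symm
        intro x hx hx'
        simp only [Finset.mem_range] at hx hx'
        rw [hglow _ (by omega), zero_smul]
      have hk : c (k + μ) = (PowerSeries.coeff μ g) • a k +
          ∑ q ∈ Finset.range k, (PowerSeries.coeff (k + μ - q) g) • a q := by
        rw [key, h1, Finset.sum_range_succ, Nat.add_sub_cancel_left, add_comm]
      have hsum : ∑ q ∈ Finset.range k, (PowerSeries.coeff (k + μ - q) g) • a q ∈
          Submodule.span C (c '' Set.Iic (k + μ)) := by
        refine Submodule.sum_mem _ fun q hq => Submodule.smul_mem _ _ ?_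
        have hq' := Finset.mem_range.mp hq
        exact Submodule.span_mono
          (Set.image_mono (Set.Iic_subset_Iic.mpr (by omega))) (ih q hq')
      have hck : c (k + μ) ∈ Submodule.span C (c '' Set.Iic (k + μ)) :=
        Submodule.subset_span ⟨k + μ, Set.mem_Iic.mpr le_rfl, rfl⟩
      have heq : a k = (PowerSeries.coeff μ g)⁻¹ •
          (c (k + μ) - ∑ q ∈ Finset.range k, (PowerSeries.coeff (k + μ - q) g) • a q) := by
        rw [hk, add_sub_cancel_right, smul_smul, inv_mul_cancel₀ hgμ, one_smul]
      rw [heq]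
      exact Submodule.smul_mem _ _ (Submodule.sub_mem _ hck hsum)
  constructor
  · intro k
    apply le_antisymm
    · rw [Submodule.span_le]
      rintro _ ⟨n, hn, rfl⟩
      exact Submodule.span_mono
        (Set.image_mono (Set.Iic_subset_Iic.mpr (by simpa using Nat.add_le_add_right hn μ)))
        (mem_a n)
    · rw [Submodule.span_le]
      rintro _ ⟨n, hn, rfl⟩
      exact mem_c k n hn
  · apply le_antisymm
    · rw [Submodule.span_le]
      rintro _ ⟨n, rfl⟩
      exact Submodule.span_mono (Set.image_subset_range _ _) (mem_a n)
    · rw [Submodule.span_le]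
      rintro _ ⟨n, rfl⟩
      exact Submodule.span_mono (Set.image_subset_range _ _) (mem_c n n (by omega))
end

section
/- Let L = ∏_{i=1}^{s}(D−αᵢ)^{μᵢ} and Q = ∏_{j=1}^{t}(D−βⱼ)^{λⱼ} be differential operators with constant coefficients, where the αᵢ are pairwise distinct and the βⱼ are pairwise distinct. Then the symmetric product satisfies L ⊗ Q = lcm over all i,j of (D − αᵢ − βⱼ)^{μᵢ+λⱼ−1}. -/
open Polynomial

/-- The action of a constant-coefficient operator `P ∈ C[D]` on a formal power series,
where `D` acts as the formal derivative. -/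
noncomputable def constOpApply {F : Type*} [Field F] (P : Polynomial F) (f : PowerSeries F) :
    PowerSeries F :=
  ∑ i ∈ Finset.range (P.natDegree + 1), P.coeff i • PowerSeries.derivativeFun^[i] f

namespace SymProd

open PowerSeries

set_option linter.unusedSectionVars false

variable {F : Type*} [Field F] [CharZero F]

/-- Derivative as a linear endomorphism. -/
noncomputable def Dop (F : Type*) [Field F] : Module.End F (PowerSeries F) where
  toFun := derivativeFun
  map_add' := derivativeFun_add
  map_smul' := fun r f => derivativeFun_smul r f

@[simp] lemma coeff_derivativeFun (f : PowerSeries F) (n : ℕ) :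
    coeff n (derivativeFun f) = coeff (n + 1) f * (n + 1) := coeff_derivative f n

lemma derivativeFun_coe (f : Polynomial F) :
    derivativeFun (f : PowerSeries F) = Polynomial.derivative f := derivative_coe f

@[simp] lemma Dop_apply (f : PowerSeries F) : Dop F f = derivativeFun f := rfl

lemma constOpApply_eq (P : Polynomial F) (f : PowerSeries F) :
    constOpApply P f = Polynomial.aeval (Dop F) P f := by
  rw [Polynomial.aeval_eq_sum_range, LinearMap.coe_sum, Finset.sum_apply]
  refine Finset.sum_congr rfl fun i _ => ?_
  rw [LinearMap.smul_apply, Module.End.pow_apply]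
  rfl

lemma constOpApply_mul (P Q : Polynomial F) (f : PowerSeries F) :
    constOpApply (P * Q) f = constOpApply P (constOpApply Q f) := by
  simp [constOpApply_eq, Module.End.mul_apply]

/-- `E a = exp(ax)`. -/
noncomputable def E (a : F) : PowerSeries F := rescale a (exp F)

lemma coeff_E (a : F) (n : ℕ) : coeff n (E a) = a ^ n * algebraMap ℚ F (1 / n.factorial) := by
  simp [E, coeff_rescale, coeff_exp]

lemma derivativeFun_E (a : F) : derivativeFun (E a) = a • E a := by
  ext n
  rw [coeff_derivativeFun, coeff_E, PowerSeries.coeff_smul, coeff_E, smul_eq_mul]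
  have hn : ((n : ℚ) + 1) ≠ 0 := by positivity
  have h : algebraMap ℚ F (1 / (n + 1).factorial) * ((n : F) + 1)
      = algebraMap ℚ F (1 / n.factorial) := by
    have : ((n : F) + 1) = algebraMap ℚ F ((n : ℚ) + 1) := by push_cast; ring
    rw [this, ← map_mul]
    congr 1
    rw [Nat.factorial_succ]
    field_simp
    push_cast; ring
  calc a ^ (n + 1) * algebraMap ℚ F (1 / (n + 1).factorial) * (n + 1)
      = a * (a ^ n * (algebraMap ℚ F (1 / (n + 1).factorial) * ((n : F) + 1))) := by
        push_cast; ring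
    _ = a * (a ^ n * algebraMap ℚ F (1 / n.factorial)) := by rw [h]

lemma E_mul_E (a b : F) : E a * E b = E (a + b) := exp_mul_exp_eq_exp_add a b

lemma E_zero : E (0 : F) = 1 := by
  simp [E, rescale_zero]

/-- `m a j = x^j exp(ax)`. -/
noncomputable def mfun (a : F) (j : ℕ) : PowerSeries F := (PowerSeries.X : PowerSeries F) ^ j * E a

lemma mfun_mul (a b : F) (j k : ℕ) : mfun a j * mfun b k = mfun (a + b) (j + k) := by
  rw [mfun, mfun, mfun, pow_add]
  rw [mul_mul_mul_comm, E_mul_E]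

lemma derivativeFun_X_pow (j : ℕ) :
    derivativeFun ((X : PowerSeries F) ^ j) = (j : F) • (X : PowerSeries F) ^ (j - 1) := by
  have h1 : ((Polynomial.X : Polynomial F) ^ j : Polynomial F) = ((X : PowerSeries F) ^ j : PowerSeries F) := by
    rw [Polynomial.coe_pow, Polynomial.coe_X]
  rw [← h1, derivativeFun_coe, Polynomial.derivative_X_pow]
  push_cast
  rw [PowerSeries.smul_eq_C_mul]

/-- `N a = D - a`. -/
noncomputable def N (a : F) : Module.End F (PowerSeries F) :=
  Dop F - a • 1

lemma aeval_X_sub_C (a : F) : Polynomial.aeval (Dop F) (Polynomial.X - Polynomial.C a) = N a := by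
  rw [map_sub, Polynomial.aeval_X, Polynomial.aeval_C, N, Algebra.algebraMap_eq_smul_one]

lemma N_mfun (a : F) (j : ℕ) : N a (mfun a j) = (j : F) • mfun a (j - 1) := by
  rw [N, LinearMap.sub_apply, LinearMap.smul_apply, Module.End.one_apply, Dop_apply, mfun,
    derivativeFun_mul, derivativeFun_E, derivativeFun_X_pow]
  rcases Nat.eq_zero_or_pos j with hj | hj
  · subst hj
    simp [mfun]
  · have : (PowerSeries.X : PowerSeries F) ^ j = PowerSeries.X * PowerSeries.X ^ (j - 1) := by
      conv_lhs => rw [← Nat.succ_pred_eq_of_pos hj]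
      rw [pow_succ, mul_comm, Nat.pred_eq_sub_one]
    rw [mfun]
    simp only [smul_eq_mul, PowerSeries.smul_eq_C_mul]
    ring

lemma N_pow_mfun (a : F) (k j : ℕ) :
    ((N a) ^ k) (mfun a j) =
      ((∏ l ∈ Finset.range k, (j - l) : ℕ) : F) • mfun a (j - k) := by
  induction k generalizing j with
  | zero => simp
  | succ k ih =>
    rw [pow_succ, Module.End.mul_apply, N_mfun, map_smul, ih, Finset.prod_range_succ']
    rw [smul_smul, Nat.cast_mul]
    have h1 : ∀ l, j - 1 - l = j - (l + 1) := fun l => by omega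
    simp only [h1, Nat.sub_zero]
    push_cast
    rw [mul_comm]

lemma N_pow_mfun_eq_zero (a : F) {k j : ℕ} (h : j < k) : ((N a) ^ k) (mfun a j) = 0 := by
  rw [N_pow_mfun]
  have : (∏ l ∈ Finset.range k, (j - l) : ℕ) = 0 :=
    Finset.prod_eq_zero (Finset.mem_range.mpr h) (Nat.sub_self j)
  rw [this]
  simp

/-- If `n < k`, then `c·(X - a)^k` kills `x^n exp(ax)`. -/
lemma aeval_kill (a : F) {k n : ℕ} (h : n < k) (c : Polynomial F) :
    Polynomial.aeval (Dop F) (c * (Polynomial.X - Polynomial.C a) ^ k) (mfun a n) = 0 := by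
  rw [map_mul, map_pow, aeval_X_sub_C, Module.End.mul_apply, N_pow_mfun_eq_zero a h, map_zero]

/-- Linear independence of the `x^j exp(γx)`. -/
lemma indep {γ : F} {Nn : ℕ} {c : ℕ → F}
    (h : ∑ i ∈ Finset.range Nn, c i • mfun γ i = 0) : ∀ i < Nn, c i = 0 := by
  have h2 : ∑ i ∈ Finset.range Nn, c i • (PowerSeries.X : PowerSeries F) ^ i = 0 := by
    have := congrArg (· * E (-γ)) h
    simp only [zero_mul, Finset.sum_mul, smul_mul_assoc] at this
    convert this using 2 with i hi
    rw [mfun, mul_assoc, E_mul_E, add_neg_cancel, E_zero, mul_one]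
  intro i hi
  have h3 := congrArg (PowerSeries.coeff i) h2
  rw [map_sum, map_zero] at h3
  rw [Finset.sum_eq_single i (fun b _ hb => by
      rw [PowerSeries.coeff_smul, PowerSeries.coeff_X_pow, if_neg (fun hh => hb hh.symm),
        smul_zero])
    (fun hni => absurd (Finset.mem_range.mpr hi) hni)] at h3
  rw [PowerSeries.coeff_smul, PowerSeries.coeff_X_pow, if_pos rfl, smul_eq_mul, mul_one] at h3
  exact h3

lemma N_eq_zero_iff {a : F} {f : PowerSeries F} :
    N a f = 0 ↔ derivativeFun f = a • f := by
  rw [N, LinearMap.sub_apply, LinearMap.smul_apply, Module.End.one_apply, Dop_apply, sub_eq_zero]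

lemma ker_N {a : F} {f : PowerSeries F} (h : N a f = 0) : f = (coeff 0 f) • E a := by
  rw [N_eq_zero_iff] at h
  have key : ∀ (g : PowerSeries F), derivativeFun g = a • g →
      ∀ n : ℕ, coeff (n + 1) g = a * coeff n g / (n + 1) := by
    intro g hg n
    have h2 := congrArg (PowerSeries.coeff n) hg
    rw [coeff_derivativeFun, PowerSeries.coeff_smul, smul_eq_mul] at h2
    have hn : ((n : F) + 1) ≠ 0 := by
      have : ((n : F) + 1) = ((n + 1 : ℕ) : F) := by push_cast; ring
      rw [this, Nat.cast_ne_zero]; omega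
    field_simp
    linear_combination h2
  ext n
  induction n with
  | zero =>
    rw [PowerSeries.coeff_smul, coeff_E, smul_eq_mul]
    simp
  | succ n ih =>
    rw [PowerSeries.coeff_smul, smul_eq_mul] at ih ⊢
    rw [key f h n, key (E a) (derivativeFun_E a) n, ih]
    ring

/-- Span of `x^j exp(ax)` for `j < μ`. -/
noncomputable def V (a : F) (μ : ℕ) : Submodule F (PowerSeries F) :=
  Submodule.span F {g | ∃ j < μ, g = mfun a j}

lemma mfun_mem_V {a : F} {j μ : ℕ} (h : j < μ) : mfun a j ∈ V a μ :=
  Submodule.subset_span ⟨j, h, rfl⟩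

lemma V_le_map (a : F) (μ : ℕ) : V a μ ≤ Submodule.map (N a) (V a (μ + 1)) := by
  rw [V, Submodule.span_le]
  rintro g ⟨j, hj, rfl⟩
  refine ⟨((j : F) + 1)⁻¹ • mfun a (j + 1), Submodule.smul_mem _ _ (mfun_mem_V (by omega)), ?_⟩
  rw [map_smul, N_mfun, Nat.add_sub_cancel, smul_smul]
  have hj1 : ((j : F) + 1) ≠ 0 := by
    have : ((j : F) + 1) = ((j + 1 : ℕ) : F) := by push_cast; ring
    rw [this, Nat.cast_ne_zero]; omega
  push_cast
  rw [inv_mul_cancel₀ hj1, one_smul]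

lemma mfun_zero (a : F) : mfun a 0 = E a := by
  rw [mfun, pow_zero, one_mul]

lemma ker_N_pow (a : F) (μ : ℕ) : ∀ f : PowerSeries F, ((N a) ^ μ) f = 0 → f ∈ V a μ := by
  induction μ with
  | zero =>
    intro f hf
    rw [pow_zero, Module.End.one_apply] at hf
    rw [hf]
    exact Submodule.zero_mem _
  | succ μ ih =>
    intro f hf
    rw [pow_succ, Module.End.mul_apply] at hf
    obtain ⟨g', hg'V, hg'⟩ := V_le_map a μ (ih _ hf)
    have hker : N a (f - g') = 0 := by rw [map_sub, hg', sub_self]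
    have : f = (f - g') + g' := by ring
    rw [this]
    refine Submodule.add_mem _ ?_ hg'V
    rw [ker_N hker, ← mfun_zero]
    exact Submodule.smul_mem _ _ (mfun_mem_V (by omega))

/-- Splitting the kernel along a coprime factorization. -/
lemma ker_mul_coprime {A B : Polynomial F} (h : IsCoprime A B) {f : PowerSeries F}
    (hf : Polynomial.aeval (Dop F) (A * B) f = 0) :
    ∃ g h', f = g + h' ∧ Polynomial.aeval (Dop F) A g = 0 ∧
      Polynomial.aeval (Dop F) B h' = 0 := by
  obtain ⟨u, v, huv⟩ := h
  refine ⟨Polynomial.aeval (Dop F) (v * B) f, Polynomial.aeval (Dop F) (u * A) f, ?_, ?_, ?_⟩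
  · have h1 : Polynomial.aeval (Dop F) (u * A + v * B) f = f := by rw [huv]; simp
    conv_lhs => rw [← h1]
    rw [map_add, LinearMap.add_apply, add_comm]
  · have : A * (v * B) = v * (A * B) := by ring
    rw [← Module.End.mul_apply, ← map_mul, this, map_mul, Module.End.mul_apply, hf, map_zero]
  · have : B * (u * A) = u * (A * B) := by ring
    rw [← Module.End.mul_apply, ← map_mul, this, map_mul, Module.End.mul_apply, hf, map_zero]

lemma ker_prod {ι : Type*} [DecidableEq ι] (W : Submodule F (PowerSeries F)) :
    ∀ (sf : Finset ι) (p : ι → Polynomial F),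
    (∀ i ∈ sf, ∀ j ∈ sf, i ≠ j → IsCoprime (p i) (p j)) →
    (∀ i ∈ sf, ∀ f : PowerSeries F, Polynomial.aeval (Dop F) (p i) f = 0 → f ∈ W) →
    ∀ f : PowerSeries F, Polynomial.aeval (Dop F) (∏ i ∈ sf, p i) f = 0 → f ∈ W := by
  intro sf
  induction sf using Finset.induction_on with
  | empty =>
    intro p _ _ f hf
    rw [Finset.prod_empty] at hf
    simp only [map_one, Module.End.one_apply] at hf
    rw [hf]
    exact W.zero_mem
  | insert _ _ ha ih =>
    rename_i a sf'
    intro p hcop hker f hf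
    rw [Finset.prod_insert ha] at hf
    have hc : IsCoprime (p a) (∏ i ∈ sf', p i) :=
      IsCoprime.prod_right fun i hi =>
        hcop a (Finset.mem_insert_self a sf') i (Finset.mem_insert_of_mem hi)
          (fun he => ha (he ▸ hi))
    obtain ⟨g, h', hsum, hg, hh⟩ := ker_mul_coprime hc hf
    rw [hsum]
    refine W.add_mem (hker a (Finset.mem_insert_self a sf') g hg) ?_
    exact ih p
      (fun i hi j hj hij => hcop i (Finset.mem_insert_of_mem hi) j (Finset.mem_insert_of_mem hj) hij)
      (fun i hi f' hf' => hker i (Finset.mem_insert_of_mem hi) f' hf') h' hh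

/-- The falling-factorial coefficient. -/
noncomputable def cfun (n i : ℕ) : F := ((∏ l ∈ Finset.range i, (n - l) : ℕ) : F)

lemma cfun_ne_zero {n i : ℕ} (h : i ≤ n) : (cfun n i : F) ≠ 0 := by
  rw [cfun, Nat.cast_ne_zero]
  have : 0 < ∏ l ∈ Finset.range i, (n - l) :=
    Finset.prod_pos fun l hl => by have := Finset.mem_range.mp hl; omega
  omega

lemma cfun_eq_zero {n i : ℕ} (h : n < i) : (cfun n i : F) = 0 := by
  rw [cfun, Finset.prod_eq_zero (Finset.mem_range.mpr h) (Nat.sub_self n), Nat.cast_zero]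

lemma aeval_C_mul_pow (c γ : F) (i : ℕ) (f : PowerSeries F) :
    Polynomial.aeval (Dop F) (Polynomial.C c * (Polynomial.X - Polynomial.C γ) ^ i) f
      = c • (((N γ) ^ i) f) := by
  rw [map_mul, map_pow, aeval_X_sub_C, Polynomial.aeval_C, Module.End.mul_apply,
    Module.algebraMap_end_apply]

lemma dvd_of_kills (γ : F) (n : ℕ) (P : Polynomial F)
    (hP : Polynomial.aeval (Dop F) P (mfun γ n) = 0) :
    (Polynomial.X - Polynomial.C γ) ^ (n + 1) ∣ P := by
  set q := Polynomial.taylor γ P with hq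
  have hcoeff : ∀ k ≤ n, q.coeff k = 0 := by
    have hsum : P = ∑ i ∈ Finset.range (q.natDegree + 1),
        Polynomial.C (q.coeff i) * (Polynomial.X - Polynomial.C γ) ^ i := by
      conv_lhs => rw [← Polynomial.sum_taylor_eq P γ]
      rw [← hq, Polynomial.sum_over_range]
      intro m; rw [map_zero, zero_mul]
    set M := q.natDegree + 1 with hM
    have h0 : ∑ i ∈ Finset.range M, (q.coeff i * cfun n i) • mfun γ (n - i) = 0 := by
      rw [← hP, hsum, map_sum, LinearMap.sum_apply]
      refine Finset.sum_congr rfl fun i _ => ?_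
      rw [aeval_C_mul_pow, N_pow_mfun, smul_smul, cfun]
    set Nb := max M (n + 1) with hNb
    have h1 : ∑ i ∈ Finset.range Nb, (q.coeff i * cfun n i) • mfun γ (n - i) = 0 := by
      rw [← Finset.sum_subset (Finset.range_subset_range.mpr (le_max_left M (n + 1)))
        (fun x _ hx => ?_), h0]
      have : q.natDegree < x := by
        rw [Finset.mem_range, not_lt] at hx; omega
      rw [Polynomial.coeff_eq_zero_of_natDegree_lt this, zero_mul, zero_smul]
    have h2 : ∑ i ∈ Finset.range (n + 1), (q.coeff i * cfun n i) • mfun γ (n - i) = 0 := by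
      rw [Finset.sum_subset (Finset.range_subset_range.mpr (le_max_right M (n + 1)))
        (fun x _ hx => ?_), h1]
      have : n < x := by rw [Finset.mem_range, not_lt] at hx; omega
      rw [cfun_eq_zero this, mul_zero, zero_smul]
    have h3 : ∑ j ∈ Finset.range (n + 1),
        (q.coeff (n - j) * cfun n (n - j)) • mfun γ j = 0 := by
      rw [← h2, ← Finset.sum_range_reflect
        (fun i => (q.coeff i * cfun n i) • mfun γ (n - i)) (n + 1)]
      refine Finset.sum_congr rfl fun j hj => ?_
      have hj' : j ≤ n := by
        have := Finset.mem_range.mp hj; omega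
      have e1 : n + 1 - 1 - j = n - j := by omega
      have e2 : n - (n - j) = j := by omega
      rw [e1, e2]
    have h4 := indep h3
    intro k hk
    have h5 := h4 (n - k) (by omega)
    have e : n - (n - k) = k := by omega
    rw [e] at h5
    rcases mul_eq_zero.mp h5 with h6 | h6
    · exact h6
    · exact absurd h6 (cfun_ne_zero (by omega))
  conv_rhs => rw [← Polynomial.sum_taylor_eq P γ, ← hq]
  rw [Polynomial.sum]
  refine Finset.dvd_sum fun i hi => ?_
  have hin : n + 1 ≤ i := by
    by_contra hc
    exact Polynomial.mem_support_iff.mp hi (hcoeff i (by omega))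
  exact Dvd.dvd.mul_left (pow_dvd_pow _ hin) _

end SymProd

open SymProd Pointwise

/-- Let `L = ∏ᵢ(D−αᵢ)^{μᵢ}` and `Q = ∏ⱼ(D−βⱼ)^{λⱼ}` with the `αᵢ` pairwise
distinct and the `βⱼ` pairwise distinct.  Then the symmetric product satisfies
`L ⊗ Q = lcm_{i,j} (D − αᵢ − βⱼ)^{μᵢ+λⱼ−1}`: the operator `S = lcm_{i,j}(…)` annihilates
every product of a solution of `L` and a solution of `Q`, and (minimality/uniqueness) `S`
divides every operator with this property. -/
theorem sym_product_constant_coefficients (F : Type*) [Field F] [IsAlgClosed F] [CharZero F]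
    [DecidableEq F]
    (s t : ℕ) (α : Fin s → F) (β : Fin t → F)
    (μ : Fin s → ℕ) (lam : Fin t → ℕ)
    (hμ : ∀ i, 1 ≤ μ i) (hlam : ∀ j, 1 ≤ lam j)
    (hα : Function.Injective α) (hβ : Function.Injective β)
    (L Q S : Polynomial F)
    (hL : L = ∏ i, (X - Polynomial.C (α i)) ^ μ i)
    (hQ : Q = ∏ j, (X - Polynomial.C (β j)) ^ lam j)
    (hS : S = (Finset.univ : Finset (Fin s × Fin t)).lcm
      fun p => (X - Polynomial.C (α p.1 + β p.2)) ^ (μ p.1 + lam p.2 - 1)) :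
    (∀ g h : PowerSeries F, constOpApply L g = 0 → constOpApply Q h = 0 →
        constOpApply S (g * h) = 0) ∧
      ∀ P : Polynomial F, P ≠ 0 →
        (∀ g h : PowerSeries F, constOpApply L g = 0 → constOpApply Q h = 0 →
          constOpApply P (g * h) = 0) → S ∣ P := by
  constructor
  · intro g h hg hh
    rw [constOpApply_eq] at hg hh ⊢
    -- membership of g in the span of solution monomials
    set setL : Set (PowerSeries F) :=
      {f | ∃ (i : Fin s) (j : ℕ), j < μ i ∧ f = mfun (α i) j} with hsetL
    set setQ : Set (PowerSeries F) :=
      {f | ∃ (i : Fin t) (j : ℕ), j < lam i ∧ f = mfun (β i) j} with hsetQ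
    have hgW : g ∈ Submodule.span F setL := by
      refine ker_prod (Submodule.span F setL) Finset.univ
        (fun i => (X - Polynomial.C (α i)) ^ μ i)
        (fun i _ j _ hij => (Polynomial.pairwise_coprime_X_sub_C hα hij).pow)
        (fun i _ f hf => ?_) g (by rw [← hL]; exact hg)
      rw [map_pow, aeval_X_sub_C] at hf
      refine Submodule.span_mono ?_ (ker_N_pow (α i) (μ i) f hf)
      rintro x ⟨j, hj, rfl⟩
      exact ⟨i, j, hj, rfl⟩
    have hhW : h ∈ Submodule.span F setQ := by
      refine ker_prod (Submodule.span F setQ) Finset.univ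
        (fun j => (X - Polynomial.C (β j)) ^ lam j)
        (fun i _ j _ hij => (Polynomial.pairwise_coprime_X_sub_C hβ hij).pow)
        (fun i _ f hf => ?_) h (by rw [← hQ]; exact hh)
      rw [map_pow, aeval_X_sub_C] at hf
      refine Submodule.span_mono ?_ (ker_N_pow (β i) (lam i) f hf)
      rintro x ⟨j, hj, rfl⟩
      exact ⟨i, j, hj, rfl⟩
    have hmul : g * h ∈ Submodule.span F setL * Submodule.span F setQ :=
      Submodule.mul_mem_mul hgW hhW
    rw [Submodule.span_mul_span] at hmul
    have hker : Submodule.span F (setL * setQ) ≤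
        LinearMap.ker (Polynomial.aeval (Dop F) S) := by
      rw [Submodule.span_le]
      rintro x hx
      obtain ⟨a, ha, b, hb, rfl⟩ := Set.mem_mul.mp hx
      obtain ⟨i, j, hj, rfl⟩ := ha
      obtain ⟨i', k, hk, rfl⟩ := hb
      rw [SetLike.mem_coe, LinearMap.mem_ker, mfun_mul]
      obtain ⟨c, hc⟩ : (X - Polynomial.C (α i + β i')) ^ (μ i + lam i' - 1) ∣ S := by
        rw [hS]
        refine Finset.dvd_lcm (b := (i, i')) ?_
        simp
      rw [hc, mul_comm]
      refine aeval_kill (α i + β i') ?_ c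
      have := hμ i; have := hlam i'; omega
    exact hker hmul
  · intro P _ hann
    rw [hS]
    apply Finset.lcm_dvd
    rintro ⟨i, j⟩ -
    have hgL : constOpApply L (mfun (α i) (μ i - 1)) = 0 := by
      rw [constOpApply_eq, hL, ← Finset.mul_prod_erase Finset.univ _ (Finset.mem_univ i),
        mul_comm]
      refine aeval_kill (α i) ?_ _
      have := hμ i; omega
    have hhQ : constOpApply Q (mfun (β j) (lam j - 1)) = 0 := by
      rw [constOpApply_eq, hQ, ← Finset.mul_prod_erase Finset.univ _ (Finset.mem_univ j),
        mul_comm]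
      refine aeval_kill (β j) ?_ _
      have := hlam j; omega
    have h0 := hann _ _ hgL hhQ
    rw [constOpApply_eq, mfun_mul] at h0
    have he : (μ i - 1) + (lam j - 1) = μ i + lam j - 2 := by
      have := hμ i; have := hlam j; omega
    rw [he] at h0
    have hd := dvd_of_kills _ _ _ h0
    have he2 : μ i + lam j - 2 + 1 = μ i + lam j - 1 := by
      have := hμ i; have := hlam j; omega
    rw [he2] at hd
    exact hd
end

section
/- Let g = xʲ·exp(αx) with j ∈ ℕ, α ∈ C, and let h = ∑_{i=1}^{ρ} uᵢ(x)·exp(θᵢx) with distinct θ₁,…,θ_ρ ∈ C and nonzero polynomials uᵢ of degree dᵢ. If L = (D−α)^{j+1} and Q = ∏_{i=1}^{ρ}(D−θᵢ)^{dᵢ+1} are the minimal annihilators of g and h in C[D], then L ⊗ Q = ∏_{i=1}^{ρ}(D−θᵢ−α)^{dᵢ+j+1} is the minimal annihilator of g·h in C[D]. -/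
open Polynomial

/-- `P` is a minimal(-order) annihilator of `f` in `C[D]`. -/
def IsMinAnnihilator {F : Type*} [Field F] (P : Polynomial F) (f : PowerSeries F) : Prop :=
  P ≠ 0 ∧ constOpApply P f = 0 ∧
    ∀ R : Polynomial F, R ≠ 0 → constOpApply R f = 0 → P.natDegree ≤ R.natDegree

/-- The power series `exp(a·x)`. -/
noncomputable def expAX {F : Type*} [Field F] [CharZero F] (a : F) : PowerSeries F :=
  PowerSeries.rescale a (PowerSeries.exp F)

namespace MinAnnAux

variable {F : Type*} [Field F] [CharZero F]

/-- The derivative as an `F`-linear endomorphism of `F⟦X⟧`. -/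
noncomputable def Dop (F : Type*) [Field F] : Module.End F (PowerSeries F) :=
  (PowerSeries.derivative F).toLinearMap

lemma Dop_apply (f : PowerSeries F) : Dop F f = PowerSeries.derivativeFun f := rfl

lemma constOpApply_eq (P : Polynomial F) (f : PowerSeries F) :
    constOpApply P f = Polynomial.aeval (Dop F) P f := by
  rw [Polynomial.aeval_eq_sum_range, constOpApply, LinearMap.sum_apply]
  refine Finset.sum_congr rfl fun i _ => ?_
  rw [LinearMap.smul_apply, Module.End.pow_apply]
  rfl

lemma constOpApply_sum {ι : Type*} (P : Polynomial F) (s : Finset ι) (f : ι → PowerSeries F) :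
    constOpApply P (∑ i ∈ s, f i) = ∑ i ∈ s, constOpApply P (f i) := by
  simp only [constOpApply_eq]; exact map_sum _ _ _

/-- The operator `p(D)` acting on polynomials. -/
noncomputable def polyOp (S p : Polynomial F) : Polynomial F :=
  Polynomial.aeval (Polynomial.derivative : Module.End F (Polynomial F)) S p

/-- Multiplication by `exp(γ·x)` composed with coercion, as a linear map. -/
noncomputable def Phi (γ : F) : Polynomial F →ₗ[F] PowerSeries F where
  toFun p := (p : PowerSeries F) * expAX γ
  map_add' p q := by simp only [Polynomial.coe_add, add_mul]
  map_smul' c p := by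
    simp only [RingHom.id_apply, Polynomial.smul_eq_C_mul, Polynomial.coe_mul, Polynomial.coe_C,
      PowerSeries.smul_eq_C_mul, mul_assoc]

lemma Phi_apply (γ : F) (p : Polynomial F) :
    Phi γ p = (p : PowerSeries F) * expAX γ := rfl

lemma derivativeFun_expAX (γ : F) :
    PowerSeries.derivativeFun (expAX γ) = γ • expAX γ := by
  ext n
  change PowerSeries.coeff n (PowerSeries.derivative F (expAX γ)) = _
  rw [PowerSeries.coeff_derivativeFun, expAX, PowerSeries.coeff_rescale,
    PowerSeries.coeff_exp, PowerSeries.smul_eq_C_mul, PowerSeries.coeff_C_mul,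
    PowerSeries.coeff_rescale, PowerSeries.coeff_exp]
  have h1 : ((1 : ℚ) / (Nat.factorial (n + 1) : ℚ)) * ((n : ℚ) + 1) = 1 / (Nat.factorial n : ℚ) := by
    rw [Nat.factorial_succ]
    have hne : (Nat.factorial n : ℚ) ≠ 0 := Nat.cast_ne_zero.mpr (Nat.factorial_ne_zero n)
    push_cast
    field_simp
  calc γ ^ (n + 1) * algebraMap ℚ F (1 / (Nat.factorial (n + 1) : ℚ)) * (n + 1)
      = γ * (γ ^ n * (algebraMap ℚ F (1 / (Nat.factorial (n + 1) : ℚ)) *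
          algebraMap ℚ F ((n : ℚ) + 1))) := by
        rw [map_add, map_natCast, map_one]; ring
    _ = γ * (γ ^ n * algebraMap ℚ F (1 / (Nat.factorial n : ℚ))) := by rw [← map_mul, h1]

/-- The "shifted derivative" endomorphism `D + γ` on polynomials. -/
noncomputable def Eop (γ : F) : Module.End F (Polynomial F) :=
  (Polynomial.derivative : Module.End F (Polynomial F)) + algebraMap F _ γ

lemma Eop_apply (γ : F) (p : Polynomial F) :
    Eop γ p = Polynomial.derivative p + γ • p := by
  simp [Eop, Module.algebraMap_end_apply]

lemma Dop_Phi (γ : F) (p : Polynomial F) : Dop F (Phi γ p) = Phi γ (Eop γ p) := by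
  rw [Dop_apply, Phi_apply, PowerSeries.derivativeFun_mul]
  change _ • _ + _ • PowerSeries.derivative F (p : PowerSeries F) = _
  rw [PowerSeries.derivativeFun_coe,
    derivativeFun_expAX, Eop_apply, Phi_apply, Polynomial.coe_add, smul_eq_mul, smul_eq_mul,
    Polynomial.smul_eq_C_mul, Polynomial.coe_mul, Polynomial.coe_C, PowerSeries.smul_eq_C_mul]
  ring

lemma DopPow_Phi (γ : F) (n : ℕ) (p : Polynomial F) :
    ((Dop F) ^ n) (Phi γ p) = Phi γ ((Eop γ ^ n) p) := by
  induction n generalizing p with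
  | zero => simp
  | succ n ih =>
    rw [pow_succ', pow_succ', Module.End.mul_apply, Module.End.mul_apply, ih, Dop_Phi]

lemma aeval_Dop_Phi (γ : F) (S p : Polynomial F) :
    Polynomial.aeval (Dop F) S (Phi γ p) = Phi γ (Polynomial.aeval (Eop γ) S p) := by
  induction S using Polynomial.induction_on' with
  | add f g hf hg =>
    simp only [map_add, LinearMap.add_apply, hf, hg]
  | monomial n c =>
    rw [Polynomial.aeval_monomial, Polynomial.aeval_monomial, Module.End.mul_apply,
      Module.End.mul_apply, Module.algebraMap_end_apply, Module.algebraMap_end_apply,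
      DopPow_Phi, map_smul]

lemma constOpApply_Phi (γ : F) (S p : Polynomial F) :
    constOpApply S (Phi γ p) = Phi γ (polyOp (S.comp (X + C γ)) p) := by
  rw [constOpApply_eq, aeval_Dop_Phi, polyOp, Polynomial.aeval_comp, map_add,
    Polynomial.aeval_X, Polynomial.aeval_C, Eop]

lemma polyOp_eq_sum (S p : Polynomial F) :
    polyOp S p = ∑ k ∈ Finset.range (S.natDegree + 1),
      S.coeff k • Polynomial.derivative^[k] p := by
  rw [polyOp, Polynomial.aeval_eq_sum_range, LinearMap.sum_apply]
  refine Finset.sum_congr rfl fun i _ => ?_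
  rw [LinearMap.smul_apply, Module.End.pow_apply]

lemma polyOp_eq_zero (S p : Polynomial F) (h : ∀ k ≤ p.natDegree, S.coeff k = 0) :
    polyOp S p = 0 := by
  rw [polyOp_eq_sum]
  refine Finset.sum_eq_zero fun k _ => ?_
  rcases le_or_gt k p.natDegree with hk | hk
  · rw [h k hk, zero_smul]
  · rw [Polynomial.iterate_derivative_eq_zero hk, smul_zero]

lemma coeff_eq_zero_of_polyOp (S p : Polynomial F) (hp : p ≠ 0) (h : polyOp S p = 0) :
    ∀ k ≤ p.natDegree, S.coeff k = 0 := by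
  by_contra hc
  push_neg at hc
  obtain ⟨k₀, hk₀le, hk₀⟩ := hc
  have hex : ∃ k, S.coeff k ≠ 0 ∧ k ≤ p.natDegree := ⟨k₀, hk₀, hk₀le⟩
  classical
  set m := Nat.find hex with hm
  obtain ⟨hmne, hmle⟩ := Nat.find_spec hex
  have hmin : ∀ k < m, S.coeff k = 0 := by
    intro k hk
    by_contra hk'
    exact Nat.find_min hex hk ⟨hk', hk.le.trans hmle⟩
  set N := p.natDegree with hN
  have hcoeff : (polyOp S p).coeff (N - m) ≠ 0 := by
    rw [polyOp_eq_sum, Polynomial.finset_sum_coeff]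
    have hrange : m ∈ Finset.range (S.natDegree + 1) :=
      Finset.mem_range.mpr (Nat.lt_succ_of_le (Polynomial.le_natDegree_of_ne_zero hmne))
    rw [Finset.sum_eq_single m]
    · rw [Polynomial.coeff_smul, Polynomial.coeff_iterate_derivative,
        Nat.sub_add_cancel hmle]
      have hdesc : (N.descFactorial m : F) ≠ 0 := by
        have : N.descFactorial m ≠ 0 := fun hz =>
          absurd (Nat.descFactorial_eq_zero_iff_lt.mp hz) (not_lt.mpr hmle)
        exact_mod_cast Nat.cast_ne_zero.mpr this
      simp only [smul_eq_mul, nsmul_eq_mul]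
      exact mul_ne_zero hmne (mul_ne_zero hdesc (Polynomial.leadingCoeff_ne_zero.mpr hp))
    · intro k _ hkm
      rcases lt_or_gt_of_ne hkm with hlt | hgt
      · rw [hmin k hlt, zero_smul, Polynomial.coeff_zero]
      · rw [Polynomial.coeff_smul, Polynomial.coeff_iterate_derivative]
        have : N < N - m + k := by omega
        rw [Polynomial.coeff_eq_zero_of_natDegree_lt this, smul_zero, smul_zero]
    · intro habs
      exact absurd hrange habs
  rw [h] at hcoeff
  exact hcoeff (Polynomial.coeff_zero _)

lemma expAX_ne_zero (γ : F) : expAX γ ≠ 0 := by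
  intro h
  have : PowerSeries.constantCoeff (expAX γ) = 1 := by
    rw [expAX, ← PowerSeries.coeff_zero_eq_constantCoeff_apply, PowerSeries.coeff_rescale,
      PowerSeries.coeff_exp]
    simp
  rw [h, map_zero] at this
  exact zero_ne_one this

lemma Phi_eq_zero_iff (γ : F) (p : Polynomial F) : Phi γ p = 0 ↔ p = 0 := by
  constructor
  · intro h
    rw [Phi_apply] at h
    rcases mul_eq_zero.mp h with h' | h'
    · exact Polynomial.coe_eq_zero_iff.mp h'
    · exact absurd h' (expAX_ne_zero γ)
  · rintro rfl; simp

lemma comp_dvd {n : ℕ} (γ : F) (R : Polynomial F)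
    (h : X ^ n ∣ R.comp (X + C γ)) : (X - C γ) ^ n ∣ R := by
  obtain ⟨T, hT⟩ := h
  have : R = ((X : Polynomial F) ^ n * T).comp (X - C γ) := by
    rw [← hT, Polynomial.comp_assoc]
    have : (X + C γ).comp (X - C γ) = (X : Polynomial F) := by
      simp [Polynomial.add_comp, Polynomial.X_comp, Polynomial.C_comp]
    rw [this, Polynomial.comp_X]
  rw [this, Polynomial.mul_comp, Polynomial.pow_comp, Polynomial.X_comp]
  exact Dvd.intro _ rfl

lemma X_pow_dvd_comp_of_factor {ι : Type*} [Fintype ι] (γ : ι → F) (n : ι → ℕ) (i : ι) :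
    (X : Polynomial F) ^ n i ∣ (∏ k, (X - C (γ k)) ^ n k).comp (X + C (γ i)) := by
  rw [Polynomial.comp_eq_aeval, map_prod]
  refine dvd_trans ?_ (Finset.dvd_prod_of_mem _ (Finset.mem_univ i))
  rw [map_pow]
  apply pow_dvd_pow_of_dvd
  rw [map_sub, Polynomial.aeval_X, Polynomial.aeval_C, Polynomial.algebraMap_eq]
  simp

/-- Linear independence of exponential monomials. -/
lemma independence {ρ : ℕ} (γ : Fin ρ → F) (hγ : Function.Injective γ)
    (q : Fin ρ → Polynomial F) (h : ∑ i, Phi (γ i) (q i) = 0) : ∀ i, q i = 0 := by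
  intro i
  by_contra hq
  classical
  set T : Polynomial F :=
    ∏ k ∈ Finset.univ.erase i, (X - C (γ k)) ^ ((q k).natDegree + 1) with hTdef
  have happ : constOpApply T (∑ k, Phi (γ k) (q k)) = 0 := by
    rw [h, constOpApply_eq, map_zero]
  rw [constOpApply_sum] at happ
  simp only [constOpApply_Phi] at happ
  have hkill : ∀ k ∈ Finset.univ.erase i,
      Phi (γ k) (polyOp (T.comp (X + C (γ k))) (q k)) = 0 := by
    intro k hk
    have hdvd : (X : Polynomial F) ^ ((q k).natDegree + 1) ∣ T.comp (X + C (γ k)) := by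
      rw [hTdef, Polynomial.comp_eq_aeval, map_prod]
      refine dvd_trans ?_ (Finset.dvd_prod_of_mem _ hk)
      rw [map_pow]
      apply pow_dvd_pow_of_dvd
      rw [map_sub, Polynomial.aeval_X, Polynomial.aeval_C, Polynomial.algebraMap_eq]
      simp
    have : polyOp (T.comp (X + C (γ k))) (q k) = 0 := by
      apply polyOp_eq_zero
      intro k' hk'
      exact (Polynomial.X_pow_dvd_iff.mp hdvd) k' (Nat.lt_succ_of_le hk')
    rw [this, map_zero]
  rw [← Finset.sum_erase_add _ _ (Finset.mem_univ i), Finset.sum_eq_zero hkill, zero_add]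
    at happ
  have hq0 : polyOp (T.comp (X + C (γ i))) (q i) = 0 := (Phi_eq_zero_iff _ _).mp happ
  have hcoeff0 := coeff_eq_zero_of_polyOp _ _ hq (hq0) 0 (Nat.zero_le _)
  have heval : (T.comp (X + C (γ i))).coeff 0 = T.eval (γ i) := by
    rw [Polynomial.coeff_zero_eq_eval_zero, Polynomial.eval_comp]
    simp
  have hTne : T.eval (γ i) ≠ 0 := by
    rw [hTdef, Polynomial.eval_prod]
    refine Finset.prod_ne_zero_iff.mpr fun k hk => ?_
    rw [Polynomial.eval_pow, Polynomial.eval_sub, Polynomial.eval_X, Polynomial.eval_C]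
    have : γ i ≠ γ k := fun hc => (Finset.mem_erase.mp hk).1 (hγ hc.symm)
    exact pow_ne_zero _ (sub_ne_zero.mpr this)
  rw [heval] at hcoeff0
  exact hTne hcoeff0

/-- The main general lemma: the minimal annihilator of ∑ pᵢ(x)exp(γᵢx). -/
theorem minAnn_expPoly {ρ : ℕ} (γ : Fin ρ → F) (hγ : Function.Injective γ)
    (p : Fin ρ → Polynomial F) (hp : ∀ i, p i ≠ 0) :
    IsMinAnnihilator (∏ i, (X - C (γ i)) ^ ((p i).natDegree + 1))
      (∑ i, Phi (γ i) (p i)) := by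
  classical
  set P : Polynomial F := ∏ i, (X - C (γ i)) ^ ((p i).natDegree + 1) with hPdef
  have hPmonic : P.Monic := by
    apply Polynomial.monic_prod_of_monic
    intro i _
    exact (Polynomial.monic_X_sub_C (γ i)).pow _
  refine ⟨hPmonic.ne_zero, ?_, ?_⟩
  · rw [constOpApply_sum]
    refine Finset.sum_eq_zero fun i _ => ?_
    rw [constOpApply_Phi]
    have hdvd : (X : Polynomial F) ^ ((p i).natDegree + 1) ∣ P.comp (X + C (γ i)) :=
      X_pow_dvd_comp_of_factor γ (fun k => (p k).natDegree + 1) i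
    have : polyOp (P.comp (X + C (γ i))) (p i) = 0 := by
      apply polyOp_eq_zero
      intro k hk
      exact (Polynomial.X_pow_dvd_iff.mp hdvd) k (Nat.lt_succ_of_le hk)
    rw [this, map_zero]
  · intro R hR hann
    rw [constOpApply_sum] at hann
    simp only [constOpApply_Phi] at hann
    have hzero : ∀ i, polyOp (R.comp (X + C (γ i))) (p i) = 0 := by
      have := independence γ hγ (fun i => polyOp (R.comp (X + C (γ i))) (p i)) hann
      exact this
    have hdvd : ∀ i : Fin ρ, (X - C (γ i)) ^ ((p i).natDegree + 1) ∣ R := by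
      intro i
      apply comp_dvd
      rw [Polynomial.X_pow_dvd_iff]
      intro k hk
      exact coeff_eq_zero_of_polyOp _ _ (hp i) (hzero i) k (Nat.lt_succ_iff.mp hk)
    have hprod : P ∣ R := by
      rw [hPdef]
      exact Finset.prod_dvd_of_coprime
        (((Polynomial.pairwise_coprime_X_sub_C hγ).set_pairwise _).mono'
          (fun a b hab => hab.pow))
        (fun i _ => hdvd i)
    exact Polynomial.natDegree_le_of_dvd hprod hR

end MinAnnAux

open MinAnnAux in
/-- Let `g = xʲ·exp(αx)` and `h = ∑ᵢ uᵢ(x)·exp(θᵢx)` with distinct `θᵢ` and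
nonzero polynomials `uᵢ` of degree `dᵢ`.  If `L = (D−α)^{j+1}` and
`Q = ∏ᵢ(D−θᵢ)^{dᵢ+1}` are the minimal annihilators of `g` and `h` in `C[D]`, then
`L ⊗ Q = ∏ᵢ(D−θᵢ−α)^{dᵢ+j+1}` is the minimal annihilator of `g·h` in `C[D]`. -/
theorem min_annihilator_of_product (F : Type*) [Field F] [IsAlgClosed F] [CharZero F]
    (j : ℕ) (a : F) (ρ : ℕ)
    (θ : Fin ρ → F) (hθ : Function.Injective θ)
    (u : Fin ρ → Polynomial F) (hu : ∀ i, u i ≠ 0)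
    (d : Fin ρ → ℕ) (hd : ∀ i, (u i).natDegree = d i)
    (g h : PowerSeries F)
    (hg : g = PowerSeries.X ^ j * expAX a)
    (hh : h = ∑ i, (u i : PowerSeries F) * expAX (θ i))
    (L Q : Polynomial F)
    (hL : L = (X - Polynomial.C a) ^ (j + 1))
    (hQ : Q = ∏ i, (X - Polynomial.C (θ i)) ^ (d i + 1))
    (hLmin : IsMinAnnihilator L g) (hQmin : IsMinAnnihilator Q h) :
    IsMinAnnihilator (∏ i, (X - Polynomial.C (θ i + a)) ^ (d i + j + 1)) (g * h) := by
  classical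
  set γ : Fin ρ → F := fun i => θ i + a with hγdef
  set p : Fin ρ → Polynomial F := fun i => X ^ j * u i with hpdef
  have hγinj : Function.Injective γ := fun i k hik => hθ (add_right_cancel hik)
  have hpne : ∀ i, p i ≠ 0 := fun i =>
    mul_ne_zero (pow_ne_zero _ Polynomial.X_ne_zero) (hu i)
  have hpdeg : ∀ i, (p i).natDegree = j + d i := by
    intro i
    rw [hpdef]
    rw [Polynomial.natDegree_mul (pow_ne_zero _ Polynomial.X_ne_zero) (hu i),
      Polynomial.natDegree_X_pow, hd i]
  have hgh : g * h = ∑ i, Phi (γ i) (p i) := by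
    rw [hg, hh, Finset.mul_sum]
    refine Finset.sum_congr rfl fun i _ => ?_
    rw [Phi_apply, hpdef, Polynomial.coe_mul, Polynomial.coe_pow, Polynomial.coe_X]
    have hexp : expAX a * expAX (θ i) = expAX (γ i) := by
      rw [expAX, expAX, expAX, PowerSeries.exp_mul_exp_eq_exp_add, hγdef]
      rw [add_comm]
    rw [← hexp]
    ring
  have hprodeq : (∏ i, (X - Polynomial.C (θ i + a)) ^ (d i + j + 1)) =
      ∏ i, (X - C (γ i)) ^ ((p i).natDegree + 1) := by
    refine Finset.prod_congr rfl fun i _ => ?_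
    rw [hpdeg i, hγdef]
    ring_nf
  rw [hprodeq, hgh]
  exact minAnn_expPoly γ hγinj p hpne
end
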